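/- Let d, d*, c* > 0 be fixed, and for each N large enough let (x_N, y_N) ∈ [0,∞)² with y_N > x_N be the unique solution of φ(x_N) + φ(y_N) = 2(d*/d)N² and ψ(y_N) − ψ(x_N) = (c*/d)N, where φ(x) = x(x+1)(2x+1)/6 and ψ(x) = x(x+1)/2. Then x_N ≍ N^{2/3}, y_N ≍ N^{2/3}, and y_N − x_N ≍ N^{1/3}; that is, there exist constants 0 < c ≤ c' and N₀ such that for all N ≥ N₀: c N^{2/3} ≤ x_N ≤ c' N^{2/3}, c N^{2/3} ≤ y_N ≤ c' N^{2/3}, and c N^{1/3} ≤ y_N − x_N ≤ c' N^{1/3}. -/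

import Mathlib

/-!
Put `u = N^{1/3}`. With `a = d*/d` and `b = c*/d` the system reads
`φ(x) + φ(y) = 2 a u⁶` and `(y - x)(x + y + 1) = 2 b u³`. Since `φ(t)` lies between `t³/3`
and `(t + 1)³/3`, the first equation gives `y ≍ u²`; then the second gives `y - x ≍ u`.
Finally `φ(y) - φ(x) ≤ (y - x)(y + 1)² = O(u⁵)` is negligible against `u⁶`, so `φ(x) ≍ u⁶`
as well.
-/

open Filter

noncomputable def phi (x : ℝ) : ℝ := x * (x + 1) * (2 * x + 1) / 6
noncomputable def psi (x : ℝ) : ℝ := x * (x + 1) / 2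

lemma phi_nonneg {x : ℝ} (hx : 0 ≤ x) : 0 ≤ phi x := by
  unfold phi; positivity

lemma phi_le_phi {x y : ℝ} (hx : 0 ≤ x) (hxy : x ≤ y) : phi x ≤ phi y := by
  unfold phi
  nlinarith [mul_nonneg (sub_nonneg.2 hxy) (mul_nonneg hx hx),
    mul_nonneg (sub_nonneg.2 hxy) (mul_nonneg hx (hx.trans hxy)),
    mul_nonneg (sub_nonneg.2 hxy) (mul_nonneg (hx.trans hxy) (hx.trans hxy)),
    mul_nonneg (sub_nonneg.2 hxy) hx]

lemma pow_three_le_three_mul_phi {x : ℝ} (hx : 0 ≤ x) : x ^ 3 ≤ 3 * phi x := by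
  unfold phi; nlinarith [sq_nonneg x]

lemma three_mul_phi_le_add_one_pow_three {x : ℝ} (hx : 0 ≤ x) : 3 * phi x ≤ (x + 1) ^ 3 := by
  unfold phi; nlinarith [sq_nonneg x]

lemma phi_sub_phi_le {x y : ℝ} (hx : 0 ≤ x) (hxy : x ≤ y) :
    phi y - phi x ≤ (y - x) * (y + 1) ^ 2 := by
  unfold phi
  have hy := hx.trans hxy
  nlinarith [mul_nonneg (sub_nonneg.2 hxy) (mul_nonneg (sub_nonneg.2 hxy) hy),
    mul_nonneg (sub_nonneg.2 hxy) (mul_nonneg (sub_nonneg.2 hxy) hx),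
    mul_nonneg (sub_nonneg.2 hxy) (mul_nonneg hx hy), mul_nonneg (sub_nonneg.2 hxy) hy,
    mul_nonneg (sub_nonneg.2 hxy) (mul_nonneg hy hy), sub_nonneg.2 hxy]

lemma psi_sub_psi (x y : ℝ) : psi y - psi x = (y - x) * (x + y + 1) / 2 := by
  unfold psi; ring

lemma rpow_one_third_pow {x : ℝ} (hx : 0 ≤ x) (n : ℕ) :
    (x ^ ((1 : ℝ) / 3)) ^ n = x ^ ((n : ℝ) / 3) := by
  rw [← Real.rpow_natCast, ← Real.rpow_mul hx]
  ring_nf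

/-- The system of the theorem in the variable `u = N^{1/3}`, with `a = d*/d` and `b = c*/d`. -/
structure IsScaledSolution (a b u X Y : ℝ) : Prop where
  nonneg : 0 ≤ X
  lt : X < Y
  phi_add_phi : phi X + phi Y = 2 * a * u ^ 6
  psi_sub_psi : psi Y - psi X = b * u ^ 3

namespace IsScaledSolution

variable {a b u X Y : ℝ}

lemma nonneg_right (h : IsScaledSolution a b u X Y) : 0 ≤ Y :=
  h.nonneg.trans h.lt.le

lemma gap_mul_eq (h : IsScaledSolution a b u X Y) : (Y - X) * (X + Y + 1) = 2 * b * u ^ 3 := by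
  linarith [h.psi_sub_psi, _root_.psi_sub_psi X Y]

lemma gap_mul_le (h : IsScaledSolution a b u X Y) : (Y - X) * (Y + 1) ≤ 2 * b * u ^ 3 := by
  nlinarith [h.gap_mul_eq, mul_nonneg (sub_nonneg.2 h.lt.le) h.nonneg]

lemma right_pow_three_le (h : IsScaledSolution a b u X Y) : Y ^ 3 ≤ 6 * a * u ^ 6 := by
  linarith [pow_three_le_three_mul_phi h.nonneg_right, phi_nonneg h.nonneg, h.phi_add_phi]

lemma le_right_add_one_pow_three (h : IsScaledSolution a b u X Y) :
    3 * a * u ^ 6 ≤ (Y + 1) ^ 3 := by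
  linarith [three_mul_phi_le_add_one_pow_three h.nonneg_right, phi_le_phi h.nonneg h.lt.le,
    h.phi_add_phi]

lemma le_left_add_one_pow_three (h : IsScaledSolution a b u X Y) :
    3 * a * u ^ 6 - 3 * b * u ^ 3 * (Y + 1) ≤ (X + 1) ^ 3 := by
  have hgap : phi Y - phi X ≤ 2 * b * u ^ 3 * (Y + 1) :=
    calc phi Y - phi X ≤ (Y - X) * (Y + 1) ^ 2 := phi_sub_phi_le h.nonneg h.lt.le
      _ = (Y - X) * (Y + 1) * (Y + 1) := by ring
      _ ≤ 2 * b * u ^ 3 * (Y + 1) :=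
        mul_le_mul_of_nonneg_right h.gap_mul_le (by linarith [h.nonneg_right])
  linarith [three_mul_phi_le_add_one_pow_three h.nonneg, h.phi_add_phi]

section Constants

variable {α γ : ℝ}

lemma right_le_mul_sq (h : IsScaledSolution a b u X Y) (hα : 0 ≤ α) (hα3 : 6 * a ≤ α ^ 3) :
    Y ≤ α * u ^ 2 := by
  refine le_of_pow_le_pow_left₀ three_ne_zero (by positivity) ?_
  have hu6 : 0 ≤ u ^ 6 := by positivity
  calc Y ^ 3 ≤ 6 * a * u ^ 6 := h.right_pow_three_le
    _ ≤ α ^ 3 * u ^ 6 := mul_le_mul_of_nonneg_right hα3 hu6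
    _ = (α * u ^ 2) ^ 3 := by ring

lemma right_add_one_le_mul_sq (h : IsScaledSolution a b u X Y) (hα : 0 ≤ α)
    (hα3 : 6 * a ≤ α ^ 3) (hu : 1 ≤ u) : Y + 1 ≤ (α + 1) * u ^ 2 := by
  nlinarith [h.right_le_mul_sq hα hα3, one_le_pow₀ (n := 2) hu]

lemma mul_sq_le_right_add_one (h : IsScaledSolution a b u X Y) (hγ3 : γ ^ 3 ≤ 3 * a) :
    γ * u ^ 2 ≤ Y + 1 := by
  refine le_of_pow_le_pow_left₀ three_ne_zero (by linarith [h.nonneg_right]) ?_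
  have hu6 : 0 ≤ u ^ 6 := by positivity
  calc (γ * u ^ 2) ^ 3 = γ ^ 3 * u ^ 6 := by ring
    _ ≤ 3 * a * u ^ 6 := mul_le_mul_of_nonneg_right hγ3 hu6
    _ ≤ (Y + 1) ^ 3 := h.le_right_add_one_pow_three

lemma gap_le (h : IsScaledSolution a b u X Y) (hγ : 0 < γ) (hγ3 : γ ^ 3 ≤ 3 * a)
    (hu : 0 < u) : Y - X ≤ 2 * b / γ * u := by
  have hpos : 0 < γ * u ^ 2 := by positivity
  refine le_of_mul_le_mul_right ?_ hpos
  calc (Y - X) * (γ * u ^ 2) ≤ (Y - X) * (Y + 1) :=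
        mul_le_mul_of_nonneg_left (h.mul_sq_le_right_add_one hγ3) (sub_nonneg.2 h.lt.le)
    _ ≤ 2 * b * u ^ 3 := h.gap_mul_le
    _ = 2 * b / γ * u * (γ * u ^ 2) := by field_simp

lemma le_gap (h : IsScaledSolution a b u X Y) (hα : 0 ≤ α) (hα3 : 6 * a ≤ α ^ 3)
    (hu : 1 ≤ u) : b / (α + 1) * u ≤ Y - X := by
  have hpos : 0 < 2 * (α + 1) * u ^ 2 := by positivity
  refine le_of_mul_le_mul_right ?_ hpos
  calc b / (α + 1) * u * (2 * (α + 1) * u ^ 2) = (Y - X) * (X + Y + 1) := by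
        rw [h.gap_mul_eq]; field_simp
    _ ≤ (Y - X) * (2 * (α + 1) * u ^ 2) := by
        refine mul_le_mul_of_nonneg_left ?_ (sub_nonneg.2 h.lt.le)
        linarith [h.right_add_one_le_mul_sq hα hα3 hu, h.lt]

lemma half_mul_sq_le_left (h : IsScaledSolution a b u X Y) (hα : 0 ≤ α)
    (hα3 : 6 * a ≤ α ^ 3) (hb : 0 ≤ b) (hγ3 : γ ^ 3 ≤ 3 * a / 2) (hu : 1 ≤ u)
    (hua : 2 * b * (α + 1) ≤ a * u) (huγ : 2 ≤ γ * u ^ 2) : γ / 2 * u ^ 2 ≤ X := by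
  suffices γ * u ^ 2 ≤ X + 1 by linarith
  refine le_of_pow_le_pow_left₀ three_ne_zero (by linarith [h.nonneg]) ?_
  have hY : 3 * b * u ^ 3 * (Y + 1) ≤ 3 * a / 2 * u ^ 6 :=
    calc 3 * b * u ^ 3 * (Y + 1) ≤ 3 * b * u ^ 3 * ((α + 1) * u ^ 2) :=
          mul_le_mul_of_nonneg_left (h.right_add_one_le_mul_sq hα hα3 hu) (by positivity)
      _ = 3 / 2 * (2 * b * (α + 1)) * u ^ 5 := by ring
      _ ≤ 3 / 2 * (a * u) * u ^ 5 := by gcongr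
      _ = 3 * a / 2 * u ^ 6 := by ring
  calc (γ * u ^ 2) ^ 3 = γ ^ 3 * u ^ 6 := by ring
    _ ≤ 3 * a / 2 * u ^ 6 := mul_le_mul_of_nonneg_right hγ3 (by positivity)
    _ ≤ (X + 1) ^ 3 := by linarith [h.le_left_add_one_pow_three]

end Constants

end IsScaledSolution

lemma eventually_isScaledSolution_bounds {a b : ℝ} (ha : 0 < a) (hb : 0 < b) :
    ∃ c c' : ℝ, 0 < c ∧ c ≤ c' ∧ ∀ᶠ u in atTop, ∀ X Y, IsScaledSolution a b u X Y →
      (c * u ^ 2 ≤ X ∧ X ≤ c' * u ^ 2) ∧ (c * u ^ 2 ≤ Y ∧ Y ≤ c' * u ^ 2) ∧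
      (c * u ≤ Y - X ∧ Y - X ≤ c' * u) := by
  set α := (6 * a) ^ ((3 : ℕ) : ℝ)⁻¹
  set γ := (3 * a / 2) ^ ((3 : ℕ) : ℝ)⁻¹
  have hα : 0 < α := by positivity
  have hγ : 0 < γ := by positivity
  have hα3 : α ^ 3 = 6 * a := Real.rpow_inv_natCast_pow (by positivity) three_ne_zero
  have hγ3 : γ ^ 3 = 3 * a / 2 := Real.rpow_inv_natCast_pow (by positivity) three_ne_zero
  have hγα : γ ≤ α :=
    (pow_le_pow_iff_left₀ hγ.le hα.le three_ne_zero).1 (by rw [hα3, hγ3]; linarith)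
  refine ⟨min (γ / 2) (b / (α + 1)), max α (2 * b / γ), by positivity,
    (min_le_left _ _).trans ((by linarith : γ / 2 ≤ α).trans (le_max_left _ _)), ?_⟩
  filter_upwards [eventually_ge_atTop 1, eventually_ge_atTop (2 * b * (α + 1) / a),
    eventually_ge_atTop (2 / γ)] with u hu1 hua huγ X Y h
  rw [div_le_iff₀' ha] at hua
  rw [div_le_iff₀' hγ] at huγ
  have huγ2 : 2 ≤ γ * u ^ 2 := by nlinarith
  have hX := h.half_mul_sq_le_left hα.le hα3.ge hb.le (by linarith) hu1 hua huγ2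
  have hY := h.right_le_mul_sq hα.le hα3.ge
  have hu2 : 0 ≤ u ^ 2 := by positivity
  have hc2 : min (γ / 2) (b / (α + 1)) * u ^ 2 ≤ γ / 2 * u ^ 2 := by
    gcongr; exact min_le_left _ _
  have hc'2 : α * u ^ 2 ≤ max α (2 * b / γ) * u ^ 2 := by gcongr; exact le_max_left _ _
  refine ⟨⟨by linarith, by linarith [h.lt]⟩, ⟨by linarith [h.lt], by linarith⟩, ?_, ?_⟩
  · calc min (γ / 2) (b / (α + 1)) * u ≤ b / (α + 1) * u := by gcongr; exact min_le_right _ _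
      _ ≤ Y - X := h.le_gap hα.le hα3.ge hu1
  · calc Y - X ≤ 2 * b / γ * u := h.gap_le hγ (by linarith) (by linarith)
      _ ≤ max α (2 * b / γ) * u := by gcongr; exact le_max_right _ _

theorem QDQC_asymptotic_law (d dstar cstar : ℝ)
    (hd : 0 < d) (hdstar : 0 < dstar) (hcstar : 0 < cstar)
    (x y : ℕ → ℝ)
    (hxy : ∀ᶠ N : ℕ in Filter.atTop,
      0 ≤ x N ∧ x N < y N ∧
      phi (x N) + phi (y N) = 2 * (dstar / d) * (N : ℝ) ^ 2 ∧
      psi (y N) - psi (x N) = (cstar / d) * (N : ℝ)) :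
    ∃ c c' : ℝ, 0 < c ∧ c ≤ c' ∧ ∃ N₀ : ℕ, ∀ N ≥ N₀,
      (c * (N : ℝ) ^ ((2 : ℝ) / 3) ≤ x N ∧ x N ≤ c' * (N : ℝ) ^ ((2 : ℝ) / 3)) ∧
      (c * (N : ℝ) ^ ((2 : ℝ) / 3) ≤ y N ∧ y N ≤ c' * (N : ℝ) ^ ((2 : ℝ) / 3)) ∧
      (c * (N : ℝ) ^ ((1 : ℝ) / 3) ≤ y N - x N ∧ y N - x N ≤ c' * (N : ℝ) ^ ((1 : ℝ) / 3)) := by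
  obtain ⟨c, c', hc, hcc', hbounds⟩ :=
    eventually_isScaledSolution_bounds (div_pos hdstar hd) (div_pos hcstar hd)
  have hu : Tendsto (fun N : ℕ => (N : ℝ) ^ ((1 : ℝ) / 3)) atTop atTop :=
    (tendsto_rpow_atTop (by norm_num)).comp tendsto_natCast_atTop_atTop
  obtain ⟨N₀, hN₀⟩ := eventually_atTop.1 ((hu.eventually hbounds).and hxy)
  refine ⟨c, c', hc, hcc', N₀, fun N hN => ?_⟩
  obtain ⟨hbound, hx, hxy, hphi, hpsi⟩ := hN₀ N hN
  have hN0 : (0 : ℝ) ≤ N := N.cast_nonneg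
  have hu2 := rpow_one_third_pow hN0 2
  have hu3 := rpow_one_third_pow hN0 3
  norm_num at hu2 hu3
  have hu6 : ((N : ℝ) ^ ((1 : ℝ) / 3)) ^ 6 = (N : ℝ) ^ 2 := by
    rw [show 6 = 3 * 2 by rfl, pow_mul, hu3]
  rw [← hu2]
  refine hbound (x N) (y N) ⟨hx, hxy, by rw [hphi, ← hu6], by rw [hpsi, hu3]⟩
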